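/- arXiv:2109.08316 — 5 statements merged into one kernel-verified Lean document; each statement's English description precedes it below -/
import Mathlib

section
/- Let ψ = ∀x₁∃y₁…∀x_k∃y_k (C₁ ∧ … ∧ C_r) be a quantified Boolean formula whose clauses are disjunctions of literals over {x₁,…,x_k,y₁,…,y_k}. If ψ is valid, then there exists a Player-2 strategy σ in the reachability game G_ψ such that every infinite word that agrees with σ and agrees with some (k+1)-transducer for Player 1 generates a play that is winning for Player 2. -/
/-- A two-player game arena: Player 1 plays actions from `A` at `V1`-vertices,
Player 2 plays actions from `B` at `V2`-vertices. `F1`/`F2` are the colorings. -/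
structure Game (V1 V2 A B : Type) where
  E1 : V1 → A → V2
  E2 : V2 → B → V1
  init : V1
  F1 : V1 → ℕ
  F2 : V2 → ℕ

/-- A finite-state transducer with output alphabet `A`, input alphabet `B`
and state set `M`. -/
structure Transducer (A B M : Type) where
  start : M
  step : M → B → M
  out : M → A

/-- The transition function extended to input words, starting from state `m`. -/
def Transducer.stepFrom {A B M : Type} (T : Transducer A B M) (m : M) (x : List B) : M :=
  x.foldl T.step m

/-- `L̂ : B* → A`, the output of the transducer after reading an input word. -/
def Transducer.outWord {A B M : Type} (T : Transducer A B M) (x : List B) : A :=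
  T.out (T.stepFrom T.start x)

/-- The history (element of `(A×B)*`) consisting of the first `n` rounds of an
infinite word given by `a` and `b`. -/
def hist {A B : Type} (a : ℕ → A) (b : ℕ → B) (n : ℕ) : List (A × B) :=
  (List.range n).map (fun i => (a i, b i))

/-- The infinite word `a₀b₀a₁b₁…` agrees with the Player-2 strategy `σ`. -/
def AgreesP2 {A B : Type} (σ : List (A × B) → A → B) (a : ℕ → A) (b : ℕ → B) : Prop :=
  ∀ n, b n = σ (hist a b n) (a n)

/-- The infinite word `a₀b₀a₁b₁…` agrees with the Player-1 strategy `τ`. -/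
def AgreesP1 {A B : Type} (τ : List (A × B) → A) (a : ℕ → A) (b : ℕ → B) : Prop :=
  ∀ n, a n = τ (hist a b n)

/-- The Player-1 strategy `f_T` induced by a transducer `T`. -/
def Transducer.strat {A B M : Type} (T : Transducer A B M) : List (A × B) → A :=
  fun h => T.outWord (h.map Prod.snd)

/-- An infinite word agrees with the transducer `T` (for Player 1). -/
def InfAgrees {A B M : Type} (T : Transducer A B M) (a : ℕ → A) (b : ℕ → B) : Prop :=
  AgreesP1 T.strat a b

/-- A finite word in `(A×B)*` agrees with the transducer `T` (for Player 1). -/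
def FinAgrees {A B M : Type} (T : Transducer A B M) (w : List (A × B)) : Prop :=
  ∀ i : Fin w.length, (w.get i).1 = T.outWord ((w.take i.val).map Prod.snd)

/-- The infinite word given by `a`, `b` extends the finite word `w`. -/
def ExtendsWord {A B : Type} (w : List (A × B)) (a : ℕ → A) (b : ℕ → B) : Prop :=
  ∀ i : Fin w.length, a i.val = (w.get i).1 ∧ b i.val = (w.get i).2

/-- The Player-1 vertices `u₀ u₁ u₂ …` of the play generated by the word
`a₀b₀a₁b₁…` from the Player-1 vertex `u0`. -/
def Game.playU {V1 V2 A B : Type} (G : Game V1 V2 A B) (u0 : V1) (a : ℕ → A) (b : ℕ → B) :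
    ℕ → V1
  | 0 => u0
  | n + 1 => G.E2 (G.E1 (G.playU u0 a b n) (a n)) (b n)

/-- The sequence of colors `F(u₀) F(v₀) F(u₁) F(v₁) …` along the play generated
by the word `a₀b₀a₁b₁…` from `u0`. -/
def Game.colorSeq {V1 V2 A B : Type} (G : Game V1 V2 A B) (u0 : V1) (a : ℕ → A) (b : ℕ → B)
    (n : ℕ) : ℕ :=
  if n % 2 = 0 then G.F1 (G.playU u0 a b (n / 2))
  else G.F2 (G.E1 (G.playU u0 a b (n / 2)) (a (n / 2)))

/-- Reachability winning condition for Player 2: some vertex of color 2 occurs. -/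
def Game.reachWin {V1 V2 A B : Type} (G : Game V1 V2 A B) (u0 : V1) (a : ℕ → A) (b : ℕ → B) :
    Prop :=
  ∃ n, G.colorSeq u0 a b n = 2

/-- Parity winning condition for Player 2: the largest color occurring infinitely
often along the play is even. -/
def Game.parityWin {V1 V2 A B : Type} (G : Game V1 V2 A B) (u0 : V1) (a : ℕ → A) (b : ℕ → B) :
    Prop :=
  ∃ c, Even c ∧ {n | G.colorSeq u0 a b n = c}.Infinite ∧
    ∀ d, {n | G.colorSeq u0 a b n = d}.Infinite → d ≤ c

/-- `G` is `k`-transducer live (for the parity winning condition): every finite word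
agreeing with some `k`-transducer for Player 1 can be extended to an infinite word that
agrees with some `k`-transducer for Player 1 and whose play is winning for Player 2. -/
def Game.kLiveParity {V1 V2 A B : Type} (G : Game V1 V2 A B) (k : ℕ) : Prop :=
  ∀ w : List (A × B), (∃ T : Transducer A B (Fin k), FinAgrees T w) →
    ∃ a b, ExtendsWord w a b ∧ (∃ T : Transducer A B (Fin k), InfAgrees T a b) ∧
      G.parityWin G.init a b

/-- `G` is `k`-transducer live (for the reachability winning condition). -/
def Game.kLiveReach {V1 V2 A B : Type} (G : Game V1 V2 A B) (k : ℕ) : Prop :=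
  ∀ w : List (A × B), (∃ T : Transducer A B (Fin k), FinAgrees T w) →
    ∃ a b, ExtendsWord w a b ∧ (∃ T : Transducer A B (Fin k), InfAgrees T a b) ∧
      G.reachWin G.init a b

/-- The history of the unique word that agrees with the Player-1 strategy `τ` and
the Player-2 strategy `σ`. -/
def inducedHist {A B : Type} (τ : List (A × B) → A) (σ : List (A × B) → A → B) :
    ℕ → List (A × B)
  | 0 => []
  | n + 1 =>
      let h := inducedHist τ σ n
      h ++ [(τ h, σ h (τ h))]

/-- The Player-1 actions of the unique word agreeing with `τ` and `σ`. -/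
def inducedA {A B : Type} (τ : List (A × B) → A) (σ : List (A × B) → A → B) (n : ℕ) : A :=
  τ (inducedHist τ σ n)

/-- The Player-2 actions of the unique word agreeing with `τ` and `σ`. -/
def inducedB {A B : Type} (τ : List (A × B) → A) (σ : List (A × B) → A → B) (n : ℕ) : B :=
  σ (inducedHist τ σ n) (inducedA τ σ n)

/-- Player-1 actions in `G_ψ`: `some (i, b)` assigns value `b` to `xᵢ`,
`none` is the exit action `e`. -/
abbrev QAct1 (k : ℕ) := Option (Fin k × Bool)

/-- Player-2 actions in `G_ψ`: `(i, b)` assigns value `b` to `yᵢ`. -/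
abbrev QAct2 (k : ℕ) := Fin k × Bool

/-- A clause over the variables `x₁,…,x_k,y₁,…,y_k`: `c isY i b = true` iff the
literal asserting that the variable `xᵢ` (for `isY = false`) resp. `yᵢ`
(for `isY = true`) has value `b` occurs in the clause. -/
def QClause (k : ℕ) := Bool → Fin k → Bool → Bool

/-- The clause `c` is satisfied by the assignments `vx` (to the `x`-variables)
and `vy` (to the `y`-variables). -/
def QClause.Sat {k : ℕ} (c : QClause k) (vx vy : Fin k → Bool) : Prop :=
  ∃ i b, (c false i b = true ∧ vx i = b) ∨ (c true i b = true ∧ vy i = b)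

/-- Validity of `∀x₁∃y₁…∀x_k∃y_k (C₁ ∧ … ∧ C_r)`, via Skolem functions for the
`y`-variables: `yᵢ` may depend only on the values of `x₁,…,xᵢ`. -/
def QBFValid {k r : ℕ} (C : Fin r → QClause k) : Prop :=
  ∃ g : Fin k → (Fin k → Bool) → Bool,
    (∀ (i : Fin k) (vx vx' : Fin k → Bool), (∀ j, j ≤ i → vx j = vx' j) → g i vx = g i vx') ∧
    ∀ vx : Fin k → Bool, ∀ j : Fin r, (C j).Sat vx (fun i => g i vx)

/-- Player-1 vertices of `G_ψ`: the initial vertex `ι`, the phase-2 vertices where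
Player 1 assigns `xᵢ`, the phase-3 vertices `v_{2i+1,j}^β` (about to assign `xᵢ` for
clause `C_j`, `β` recording whether `C_j` is already satisfied), and a Player-1
vertex of each paradise (`para true` belongs to the Player-2 paradise,
`para false` to the Player-1 paradise). -/
inductive QV1 (k r : ℕ) where
  | start
  | ph2x (i : Fin k)
  | ph3x (j : Fin r) (i : Fin k) (β : Bool)
  | para (p : Bool)

/-- Player-2 vertices of `G_ψ`: the phase-1 vertex `n`, phase-2 vertices where
Player 2 assigns `yᵢ`, the phase-3 vertices `v_{2i+2,j}^β`, and a Player-2 vertex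
of each paradise. -/
inductive QV2 (k r : ℕ) where
  | ph1
  | ph2y (i : Fin k)
  | ph3y (j : Fin r) (i : Fin k) (β : Bool)
  | para (p : Bool)

/-- Transitions of `G_ψ` from Player-1 vertices. Unspecified actions lead to the
Player-2 paradise; the exit action `e` leads to the Player-2 paradise in phases 1–2
and (except from `v_{1,1}^⊥`) to the Player-1 paradise in phase 3. -/
def qbfE1 {k r : ℕ} (C : Fin r → QClause k) : QV1 k r → QAct1 k → QV2 k r
  | .start, none => .ph1
  | .start, some _ => .para true
  | .ph2x i, some (i', _) => if i' = i then .ph2y i else .para true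
  | .ph2x _, none => .para true
  | .ph3x j i β, some (i', bv) =>
      if i' = i then .ph3y j i (β || C j false i bv) else .para true
  | .ph3x j i β, none =>
      if (j : ℕ) = 0 ∧ (i : ℕ) = 0 ∧ β = false then .para true else .para false
  | .para p, _ => .para p

/-- Transitions of `G_ψ` from Player-2 vertices. Illegal actions lead to the
Player-1 paradise; at the end of stage `j` of phase 3 the play proceeds to the next
stage (to the Player-2 paradise after the last stage) if `C_j` is satisfied, and to
the Player-1 paradise if `C_j` is unsatisfied. -/
def qbfE2 {k r : ℕ} (C : Fin r → QClause k) : QV2 k r → QAct2 k → QV1 k r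
  | .ph1, _ => if h : 0 < k then .ph2x ⟨0, h⟩ else .para true
  | .ph2y i, (i', _) =>
      if i' = i then
        if h : (i : ℕ) + 1 < k then .ph2x ⟨(i : ℕ) + 1, h⟩
        else if hr : 0 < r then .ph3x ⟨0, hr⟩ ⟨0, i.pos⟩ false
        else .para true
      else .para false
  | .ph3y j i β, (i', bv) =>
      if i' = i then
        let β' := β || C j true i bv
        if h : (i : ℕ) + 1 < k then .ph3x j ⟨(i : ℕ) + 1, h⟩ β'
        else if β' = true then
          if hj : (j : ℕ) + 1 < r then .ph3x ⟨(j : ℕ) + 1, hj⟩ ⟨0, i.pos⟩ false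
          else .para true
        else .para false
      else .para false
  | .para p, _ => .para p

/-- Coloring of `G_ψ`: the Player-2 paradise has color 2, all other vertices color 1. -/
def qbfF1 {k r : ℕ} : QV1 k r → ℕ
  | .para true => 2
  | _ => 1

def qbfF2 {k r : ℕ} : QV2 k r → ℕ
  | .para true => 2
  | _ => 1

/-- The reachability game `G_ψ` for the QBF `ψ` with clauses `C`. -/
def qbfGame {k r : ℕ} (C : Fin r → QClause k) :
    Game (QV1 k r) (QV2 k r) (QAct1 k) (QAct2 k) where
  E1 := qbfE1 C
  E2 := qbfE2 C
  init := .start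
  F1 := qbfF1
  F2 := qbfF2


/-- Extract the Boolean value from a Player-1 action. -/
def qbfExtract {k : ℕ} : QAct1 k → Bool
  | some (_, bv) => bv
  | none => false

/-- The Player-2 strategy: in phase 2 play the Skolem values, afterwards replay
the action from `k` rounds earlier. -/
def qbfSigma {k : ℕ} (hk : 0 < k) (g : Fin k → (Fin k → Bool) → Bool) :
    List (QAct1 k × QAct2 k) → QAct1 k → QAct2 k := fun h a =>
  if h.length = 0 then (⟨0, hk⟩, false)
  else if h.length ≤ k then
    ((⟨(h.length - 1) % k, Nat.mod_lt _ hk⟩ : Fin k),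
      g ⟨(h.length - 1) % k, Nat.mod_lt _ hk⟩
        (fun j => qbfExtract (((h ++ [(a, ((⟨0, hk⟩ : Fin k), false))]).getD (j.val + 1)
          (none, (⟨0, hk⟩, false))).1)))
  else (h.getD (h.length - k) (none, (⟨0, hk⟩, false))).2

/-- If the QBF `ψ = ∀x₁∃y₁…∀x_k∃y_k (C₁ ∧ … ∧ C_r)` is valid,
then Player 2 has a strategy `σ` in the reachability game `G_ψ` such that every
infinite word that agrees with `σ` and agrees with some `(k+1)`-transducer for
Player 1 generates a play that is winning for Player 2. -/
theorem qbf_valid_implies_p2_wins_against_bounded_env {k r : ℕ} (hk : 0 < k) (hr : 0 < r)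
    (C : Fin r → QClause k) (hval : QBFValid C) :
    ∃ σ : List (QAct1 k × QAct2 k) → QAct1 k → QAct2 k,
      ∀ (a : ℕ → QAct1 k) (b : ℕ → QAct2 k), AgreesP2 σ a b →
        (∃ T : Transducer (QAct1 k) (QAct2 k) (Fin (k + 1)), InfAgrees T a b) →
        (qbfGame C).reachWin (qbfGame C).init a b := by
  obtain ⟨g, hg, hsat⟩ := hval
  refine ⟨qbfSigma hk g, ?_⟩
  rintro a b hσ ⟨T, hT⟩
  by_contra hwin
  simp only [Game.reachWin] at hwin
  set u : ℕ → QV1 k r := (qbfGame C).playU (qbfGame C).init a b with hu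
  have hustep : ∀ n, u (n+1) = qbfE2 C (qbfE1 C (u n) (a n)) (b n) := fun n => rfl
  have hu0 : u 0 = QV1.start := rfl
  have hU : ∀ n, u n ≠ QV1.para true := by
    intro n h
    apply hwin
    refine ⟨2*n, ?_⟩
    have h1 : (2*n) % 2 = 0 := by omega
    have h2 : (2*n) / 2 = n := by omega
    simp only [Game.colorSeq, h1, if_pos rfl, h2]
    show qbfF1 (u n) = 2
    rw [h]
    rfl
  have hV : ∀ n, qbfE1 C (u n) (a n) ≠ QV2.para true := by
    intro n h
    apply hwin
    refine ⟨2*n+1, ?_⟩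
    have h1 : (2*n+1) % 2 = 1 := by omega
    have h2 : (2*n+1) / 2 = n := by omega
    simp only [Game.colorSeq, h1, h2, if_neg (by norm_num : ¬(1:ℕ) = 0)]
    show qbfF2 (qbfE1 C (u n) (a n)) = 2
    rw [h]
    rfl
  -- basic list facts about `hist`
  have histlen : ∀ n, (hist a b n).length = n := fun n => by simp [hist]
  have hgetD : ∀ n mm (d : QAct1 k × QAct2 k), mm < n → (hist a b n).getD mm d = (a mm, b mm) := by
    intro n mm d h
    rw [List.getD_eq_getElem _ _ (by simp [hist]; omega)]
    simp [hist]
  -- the assignments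
  set vx : Fin k → Bool := fun j => qbfExtract (a (j.val + 1)) with hvx
  set vy : Fin k → Bool := fun j => g j vx with hvy
  -- Player 2's actions in phase 2
  have hbx : ∀ i (hi : i < k), b (i+1) = (⟨i, hi⟩, vy ⟨i, hi⟩) := by
    intro i hi
    have hlen : (hist a b (i+1)).length = i + 1 := histlen (i+1)
    have hget : ∀ jv : ℕ, jv + 1 ≤ i + 1 →
        ((hist a b (i+1) ++ [(a (i+1), ((⟨0, hk⟩ : Fin k), false))]).getD (jv+1)
          (none, (⟨0, hk⟩, false))).1 = a (jv+1) := by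
      intro jv hjv
      rcases Nat.lt_or_ge (jv+1) (i+1) with h | h
      · rw [List.getD_append _ _ _ _ (by rw [hlen]; omega)]
        rw [hgetD (i+1) (jv+1) _ h]
      · have hje : jv + 1 = i + 1 := by omega
        rw [hje, List.getD_append_right _ _ _ _ (by rw [hlen])]
        rw [hlen]
        simp
    rw [hσ (i+1)]
    unfold qbfSigma
    rw [if_neg (by rw [hlen]; omega), if_pos (by rw [hlen]; omega)]
    simp only [hlen]
    have e1 : (i + 1 - 1) % k = i := by
      rw [Nat.add_sub_cancel, Nat.mod_eq_of_lt hi]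
    simp only [e1]
    refine Prod.ext rfl ?_
    show g ⟨i, _⟩ _ = vy ⟨i, hi⟩
    rw [hvy]
    apply hg
    intro j hj
    have hj2 : (j : ℕ) ≤ i := hj
    have hgj := hget j.val (by omega)
    exact congrArg qbfExtract hgj
  -- Player 2 replays with period k afterwards
  have hbrep : ∀ n, k < n → b n = b (n - k) := by
    intro n h
    rw [hσ n]
    unfold qbfSigma
    rw [if_neg (by rw [histlen]; omega), if_neg (by rw [histlen]; omega)]
    rw [histlen]
    rw [hgetD n (n - k) _ (by omega)]
  have bper : ∀ n, 1 ≤ n → b (n + k) = b n := by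
    intro n hn
    have := hbrep (n + k) (by omega)
    simpa using this
  -- the play in phase 2
  have ha0 : a 0 = none := by
    cases h : a 0 with
    | none => rfl
    | some p =>
      exact absurd (by rw [hu0, h]; rfl) (hV 0)
  have hph2 : ∀ i (hi : i < k), u (i+1) = QV1.ph2x ⟨i, hi⟩ := by
    intro i
    induction i with
    | zero =>
      intro hi
      rw [hustep 0, hu0, ha0]
      simp [qbfE1, qbfE2, hk]
    | succ i ih =>
      intro hi
      have hi' : i < k := by omega
      have hui := ih hi'
      obtain ⟨c, hac⟩ : ∃ c, a (i+1) = some ((⟨i, hi'⟩ : Fin k), c) := by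
        cases hA : a (i+1) with
        | none =>
          exact absurd (by rw [hui, hA]; rfl) (hV (i+1))
        | some p =>
          obtain ⟨i', c⟩ := p
          by_cases h : i' = ⟨i, hi'⟩
          · exact ⟨c, by rw [h]⟩
          · exact absurd (by rw [hui, hA]; simp [qbfE1, h]) (hV (i+1))
      rw [show i+1+1 = (i+1)+1 from rfl, hustep (i+1), hui, hac, hbx i hi']
      simp [qbfE1, qbfE2, hi]
  have hax : ∀ i (hi : i < k), a (i+1) = some (⟨i, hi⟩, vx ⟨i, hi⟩) := by
    intro i hi
    have hui := hph2 i hi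
    cases hA : a (i+1) with
    | none =>
      exact absurd (by rw [hui, hA]; rfl) (hV (i+1))
    | some p =>
      obtain ⟨i', c⟩ := p
      by_cases h : i' = ⟨i, hi⟩
      · subst h
        have hc : vx ⟨i, hi⟩ = c := by
          show qbfExtract (a (i+1)) = c
          rw [hA]
          rfl
        rw [hc]
      · exact absurd (by rw [hui, hA]; simp [qbfE1, h]) (hV (i+1))
  have huk1 : u (k+1) = QV1.ph3x ⟨0, hr⟩ ⟨0, hk⟩ false := by
    have hk1 : k - 1 < k := by omega
    have hnlt : ¬ (k - 1 + 1 < k) := by omega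
    have h2 : u ((k-1)+1+1) = QV1.ph3x ⟨0, hr⟩ ⟨0, hk⟩ false := by
      rw [hustep, hph2 (k-1) hk1, hax (k-1) hk1, hbx (k-1) hk1]
      simp [qbfE1, qbfE2, hnlt, hr]
    rw [show k+1 = (k-1)+1+1 by omega]
    exact h2
  -- the transducer states
  set m : ℕ → Fin (k+1) := fun n => T.stepFrom T.start ((List.range n).map b) with hm
  have ham : ∀ n, a n = T.out (m n) := by
    intro n
    rw [hT n]
    simp [Transducer.strat, Transducer.outWord, hist, hm, List.map_map, Function.comp_def]
  have hmstep : ∀ n, m (n+1) = T.step (m n) (b n) := by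
    intro n
    simp [hm, List.range_succ, Transducer.stepFrom]
  -- injectivity / surjectivity on the first k+1 states
  have hφinj : Function.Injective (fun t : Fin (k+1) => m t.val) := by
    intro s t hst
    simp only at hst
    have ha' : a s.val = a t.val := by rw [ham, ham, hst]
    apply Fin.ext
    rcases s with ⟨sv, hs⟩
    rcases t with ⟨tv, ht⟩
    simp only
    cases sv with
    | zero =>
      cases tv with
      | zero => rfl
      | succ tv =>
        rw [show ((⟨0, hs⟩ : Fin (k+1)) : ℕ) = 0 from rfl,
          show ((⟨tv+1, ht⟩ : Fin (k+1)) : ℕ) = tv+1 from rfl, ha0, hax tv (by omega)] at ha'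
        simp at ha'
    | succ sv =>
      cases tv with
      | zero =>
        rw [show ((⟨sv+1, hs⟩ : Fin (k+1)) : ℕ) = sv+1 from rfl,
          show ((⟨0, ht⟩ : Fin (k+1)) : ℕ) = 0 from rfl, ha0, hax sv (by omega)] at ha'
        simp at ha'
      | succ tv =>
        rw [show ((⟨sv+1, hs⟩ : Fin (k+1)) : ℕ) = sv+1 from rfl,
          show ((⟨tv+1, ht⟩ : Fin (k+1)) : ℕ) = tv+1 from rfl,
          hax sv (by omega), hax tv (by omega)] at ha'
        simp [Fin.mk.injEq] at ha'
        omega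
  have hφsurj : Function.Surjective (fun t : Fin (k+1) => m t.val) :=
    Finite.injective_iff_surjective.mp hφinj
  -- the key pumping step
  have hmk1 : m (k+1) = m 1 := by
    obtain ⟨c, hac⟩ : ∃ c, a (k+1) = some ((⟨0, hk⟩ : Fin k), c) := by
      cases hA : a (k+1) with
      | none =>
        exact absurd (by rw [huk1, hA]; simp [qbfE1]) (hV (k+1))
      | some p =>
        obtain ⟨i', c⟩ := p
        by_cases h : i' = ⟨0, hk⟩
        · exact ⟨c, by rw [h]⟩
        · exact absurd (by rw [huk1, hA]; simp [qbfE1, h]) (hV (k+1))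
    obtain ⟨t, ht⟩ := hφsurj (m (k+1))
    have ht' : m t.val = m (k+1) := ht
    have hat : a t.val = a (k+1) := by rw [ham, ham, ht']
    rcases t with ⟨tv, htv⟩
    cases tv with
    | zero =>
      rw [show ((⟨0, htv⟩ : Fin (k+1)) : ℕ) = 0 from rfl, ha0, hac] at hat
      simp at hat
    | succ tv =>
      have htk : tv < k := by omega
      rw [show ((⟨tv+1, htv⟩ : Fin (k+1)) : ℕ) = tv+1 from rfl, hax tv htk, hac] at hat
      simp [Fin.mk.injEq] at hat
      obtain ⟨h0, -⟩ := hat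
      subst h0
      exact ht'.symm
  have hmper : ∀ n, 1 ≤ n → m (n + k) = m n := by
    intro n hn
    induction n with
    | zero => omega
    | succ n ih =>
      rcases Nat.lt_or_ge 0 n with h | h
      · rw [show n + 1 + k = (n + k) + 1 by ring, hmstep, ih (by omega), bper n (by omega), hmstep]
      · have hn0 : n = 0 := by omega
        subst hn0
        rw [show 1 + k = k + 1 by ring]
        exact hmk1
  have haper : ∀ n, 1 ≤ n → a (n + k) = a n := fun n hn => by
    rw [ham, ham, hmper n hn]
  have haq : ∀ q n, 1 ≤ n → a (n + q * k) = a n := by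
    intro q
    induction q with
    | zero => intro n hn; simp
    | succ q ih =>
      intro n hn
      rw [show n + (q+1)*k = (n + q*k) + k by ring, haper _ (by omega), ih n hn]
  have hbq : ∀ q n, 1 ≤ n → b (n + q * k) = b n := by
    intro q
    induction q with
    | zero => intro n hn; simp
    | succ q ih =>
      intro n hn
      rw [show n + (q+1)*k = (n + q*k) + k by ring, bper _ (by omega), ih n hn]
  -- phase 3, stage by stage
  have hstage : ∀ (j : ℕ) (hj : j < r),
      u ((j+1)*k + 1) = QV1.ph3x ⟨j, hj⟩ ⟨0, hk⟩ false →
      ∃ hj2 : j + 1 < r, u ((j+2)*k + 1) = QV1.ph3x ⟨j+1, hj2⟩ ⟨0, hk⟩ false := by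
    intro j hj hstart
    have hin : ∀ i (hi : i < k), ∃ β : Bool,
        u ((j+1)*k + 1 + i) = QV1.ph3x ⟨j, hj⟩ ⟨i, hi⟩ β ∧
        (∀ t : Fin k, t.val < i →
          (C ⟨j, hj⟩ false t (vx t) = true ∨ C ⟨j, hj⟩ true t (vy t) = true) → β = true) := by
      intro i
      induction i with
      | zero =>
        intro hi
        refine ⟨false, by simpa using hstart, ?_⟩
        intro t ht _
        omega
      | succ i ih =>
        intro hi
        have hi' : i < k := by omega
        obtain ⟨β, huin, hβ⟩ := ih hi'
        have han : a ((j+1)*k + 1 + i) = some ((⟨i, hi'⟩ : Fin k), vx ⟨i, hi'⟩) := by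
          rw [show (j+1)*k+1+i = (i+1) + (j+1)*k by ring, haq (j+1) (i+1) (by omega), hax i hi']
        have hbn : b ((j+1)*k + 1 + i) = ((⟨i, hi'⟩ : Fin k), vy ⟨i, hi'⟩) := by
          rw [show (j+1)*k+1+i = (i+1) + (j+1)*k by ring, hbq (j+1) (i+1) (by omega), hbx i hi']
        refine ⟨β || C ⟨j, hj⟩ false ⟨i, hi'⟩ (vx ⟨i, hi'⟩) || C ⟨j, hj⟩ true ⟨i, hi'⟩ (vy ⟨i, hi'⟩),
          ?_, ?_⟩
        · rw [show (j+1)*k+1+(i+1) = ((j+1)*k+1+i)+1 by ring, hustep, huin, han, hbn]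
          simp [qbfE1, qbfE2, hi]
        · intro t ht hlit
          rcases Nat.lt_succ_iff_lt_or_eq.mp ht with h | h
          · simp [hβ t h hlit]
          · have hteq : t = ⟨i, hi'⟩ := Fin.ext h
            rw [hteq] at hlit
            rcases hlit with h1 | h1 <;> simp [h1]
    -- end of the stage
    have hk1 : k - 1 < k := by omega
    have hnlt : ¬ (k - 1 + 1 < k) := by omega
    obtain ⟨β, huin, hβ⟩ := hin (k-1) hk1
    have han : a ((j+1)*k + 1 + (k-1)) = some ((⟨k-1, hk1⟩ : Fin k), vx ⟨k-1, hk1⟩) := by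
      rw [show (j+1)*k+1+(k-1) = ((k-1)+1) + (j+1)*k by omega, haq (j+1) _ (by omega),
        hax (k-1) hk1]
    have hbn : b ((j+1)*k + 1 + (k-1)) = ((⟨k-1, hk1⟩ : Fin k), vy ⟨k-1, hk1⟩) := by
      rw [show (j+1)*k+1+(k-1) = ((k-1)+1) + (j+1)*k by omega, hbq (j+1) _ (by omega),
        hbx (k-1) hk1]
    have hβ' : (β || C ⟨j, hj⟩ false ⟨k-1, hk1⟩ (vx ⟨k-1, hk1⟩)
        || C ⟨j, hj⟩ true ⟨k-1, hk1⟩ (vy ⟨k-1, hk1⟩)) = true := by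
      obtain ⟨t, bb, hlit⟩ := hsat vx ⟨j, hj⟩
      have hlit' : C ⟨j, hj⟩ false t (vx t) = true ∨ C ⟨j, hj⟩ true t (vy t) = true := by
        rcases hlit with ⟨h1, h2⟩ | ⟨h1, h2⟩
        · left; rw [show vx t = bb from h2]; exact h1
        · right; rw [show vy t = bb from h2]; exact h1
      rcases Nat.lt_or_ge t.val (k-1) with h | h
      · simp [hβ t h hlit']
      · have hteq : t = ⟨k-1, hk1⟩ := Fin.ext (show (t : ℕ) = k - 1 by have := t.isLt; omega)
        rw [hteq] at hlit'
        rcases hlit' with h1 | h1 <;> simp [h1]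
    have hnext : u ((j+1)*k + 1 + (k-1) + 1) =
        if hj2 : j + 1 < r then QV1.ph3x ⟨j+1, hj2⟩ ⟨0, hk⟩ false else QV1.para true := by
      rw [hustep, huin, han, hbn]
      simp [qbfE1, qbfE2, hnlt, hβ']
    by_cases hj2 : j + 1 < r
    · refine ⟨hj2, ?_⟩
      rw [show (j+2)*k+1 = (j+1)*k+1+(k-1)+1 by rw [show (j+2)*k = (j+1)*k + k by ring]; omega, hnext, dif_pos hj2]
    · exact absurd (by rw [hnext, dif_neg hj2]) (hU ((j+1)*k+1+(k-1)+1))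
  have hall : ∀ j (hj : j < r), u ((j+1)*k + 1) = QV1.ph3x ⟨j, hj⟩ ⟨0, hk⟩ false := by
    intro j
    induction j with
    | zero =>
      intro hj
      rw [show (0+1)*k+1 = k+1 by ring]
      exact huk1
    | succ j ih =>
      intro hj
      obtain ⟨hj2, h⟩ := hstage j (by omega) (ih (by omega))
      exact h
  obtain ⟨hbad, -⟩ := hstage (r-1) (by omega) (hall (r-1) (by omega))
  omega
end

section
/- Let G be a parity game. If G is not k-transducer live, then there exists a k-transducer T for Player 1 such that some position of the product game G̃ that is reachable from (ι, s) is losing for Player 2. -/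
/-- The Player-1 vertices `u₀ u₁ …` of the play generated from a **Player-2**
vertex `v0` by the word `b₀a₀b₁a₁…` (Player 2 moves first). -/
def Game.playV2U {V1 V2 A B : Type} (G : Game V1 V2 A B) (v0 : V2) (b : ℕ → B) (a : ℕ → A) :
    ℕ → V1
  | 0 => G.E2 v0 (b 0)
  | n + 1 => G.E2 (G.E1 (G.playV2U v0 b a n) (a n)) (b (n + 1))

/-- The sequence of colors `F(v₀) F(u₀) F(v₁) F(u₁) …` along the play generated
from the Player-2 vertex `v0` by the word `b₀a₀b₁a₁…`. -/
def Game.colorSeqV2 {V1 V2 A B : Type} (G : Game V1 V2 A B) (v0 : V2) (b : ℕ → B) (a : ℕ → A)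
    (n : ℕ) : ℕ :=
  if n = 0 then G.F2 v0
  else if n % 2 = 1 then G.F1 (G.playV2U v0 b a ((n - 1) / 2))
  else G.F2 (G.E1 (G.playV2U v0 b a ((n - 2) / 2)) (a ((n - 2) / 2)))

/-- Parity winning condition for Player 2 for plays starting at a Player-2 vertex. -/
def Game.parityWinV2 {V1 V2 A B : Type} (G : Game V1 V2 A B) (v0 : V2) (b : ℕ → B)
    (a : ℕ → A) : Prop :=
  ∃ c, Even c ∧ {n | G.colorSeqV2 v0 b a n = c}.Infinite ∧
    ∀ d, {n | G.colorSeqV2 v0 b a n = d}.Infinite → d ≤ c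

/-- Histories for plays starting at a Player-2 vertex. -/
def histV2 {A B : Type} (b : ℕ → B) (a : ℕ → A) (n : ℕ) : List (B × A) :=
  (List.range n).map (fun i => (b i, a i))

/-- Agreement with a Player-2 strategy for plays starting at a Player-2 vertex. -/
def AgreesP2V2 {A B : Type} (τ : List (B × A) → B) (b : ℕ → B) (a : ℕ → A) : Prop :=
  ∀ n, b n = τ (histV2 b a n)

/-- A Player-1 position `u0` is winning for Player 2 in the parity game `G`. -/
def Game.WinFromV1 {V1 V2 A B : Type} (G : Game V1 V2 A B) (u0 : V1) : Prop :=
  ∃ σ : List (A × B) → A → B, ∀ a b, AgreesP2 σ a b → G.parityWin u0 a b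

/-- A Player-2 position `v0` is winning for Player 2 in the parity game `G`. -/
def Game.WinFromV2 {V1 V2 A B : Type} (G : Game V1 V2 A B) (v0 : V2) : Prop :=
  ∃ τ : List (B × A) → B, ∀ b a, AgreesP2V2 τ b a → G.parityWinV2 v0 b a

/-- A position of `G` (belonging to either player) is winning for Player 2. -/
def Game.WinPos {V1 V2 A B : Type} (G : Game V1 V2 A B) : V1 ⊕ V2 → Prop :=
  Sum.elim G.WinFromV1 G.WinFromV2

/-- The positions reachable from the initial vertex by finite sequences of actions. -/
inductive Game.ReachPos {V1 V2 A B : Type} (G : Game V1 V2 A B) : V1 ⊕ V2 → Prop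
  | base : G.ReachPos (Sum.inl G.init)
  | step1 (u : V1) (x : A) : G.ReachPos (Sum.inl u) → G.ReachPos (Sum.inr (G.E1 u x))
  | step2 (v : V2) (y : B) : G.ReachPos (Sum.inr v) → G.ReachPos (Sum.inl (G.E2 v y))

/-- The product game `G̃` of a parity game `G` and a transducer `T` for Player 1,
where any Player-1 action deviating from `T` leads to the Player-2-winning
vertex `top`. -/
def Game.prod {V1 V2 A B M : Type} [DecidableEq A] (G : Game V1 V2 A B)
    (T : Transducer A B M) (top : V2) : Game (V1 × M) (V2 × M) A B where
  E1 := fun p x => if x = T.out p.2 then (G.E1 p.1 x, p.2) else (top, p.2)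
  E2 := fun p y => (G.E2 p.1 y, T.step p.2 y)
  init := (G.init, T.start)
  F1 := fun p => G.F1 p.1
  F2 := fun p => G.F2 p.1

/-! If `G` is not `k`-transducer live, some finite word `w` agreeing with a `k`-transducer `T`
has no extension that agrees with a `k`-transducer and is won by Player 2. The position of `G̃`
reached by `w` is then losing for Player 2: against a winning strategy `σ` there, let Player 1
continue with `T` restarted after `w`. Player 1 never deviates from `T`, so the resulting play
never enters `⊤` and is a play of `G`; prefixed with `w` it is an extension of `w` agreeing
with `T`, and it is won by Player 2 because the parity condition ignores finite prefixes. -/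

section Plays

variable {V1 V2 A B : Type}

def Game.runWord (G : Game V1 V2 A B) (u : V1) (w : List (A × B)) : V1 :=
  w.foldl (fun u p => G.E2 (G.E1 u p.1) p.2) u

theorem Game.ReachPos.runWord {G : Game V1 V2 A B} {u : V1} (hu : G.ReachPos (Sum.inl u))
    (w : List (A × B)) : G.ReachPos (Sum.inl (G.runWord u w)) := by
  induction w generalizing u with
  | nil => exact hu
  | cons p w ih => exact ih (.step2 _ p.2 (.step1 _ p.1 hu))

theorem hist_succ (a : ℕ → A) (b : ℕ → B) (n : ℕ) :
    hist a b (n + 1) = hist a b n ++ [(a n, b n)] := by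
  simp [hist, List.range_succ]

theorem hist_add (a : ℕ → A) (b : ℕ → B) (n j : ℕ) :
    hist a b (n + j) = hist a b n ++ hist (fun i => a (n + i)) (fun i => b (n + i)) j := by
  simp [hist, List.range_add]

theorem take_hist (a : ℕ → A) (b : ℕ → B) {i n : ℕ} (hi : i ≤ n) :
    (hist a b n).take i = hist a b i := by
  obtain ⟨j, rfl⟩ := Nat.exists_eq_add_of_le hi
  rw [hist_add]
  exact List.take_left' (by simp [hist])

theorem ExtendsWord.hist_length {w : List (A × B)} {a : ℕ → A} {b : ℕ → B}
    (h : ExtendsWord w a b) : hist a b w.length = w := by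
  refine List.ext_getElem (by simp [hist]) fun i hi hw => ?_
  obtain ⟨ha, hb⟩ := h ⟨i, hw⟩
  simp [hist, ha, hb]

theorem Game.playU_eq_runWord (G : Game V1 V2 A B) (u : V1) (a : ℕ → A) (b : ℕ → B) (n : ℕ) :
    G.playU u a b n = G.runWord u (hist a b n) := by
  induction n with
  | zero => rfl
  | succ n ih => simp [Game.playU, ih, hist_succ, Game.runWord, List.foldl_append]

theorem Game.playU_add (G : Game V1 V2 A B) (u : V1) (a : ℕ → A) (b : ℕ → B) (n j : ℕ) :
    G.playU u a b (n + j)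
      = G.playU (G.playU u a b n) (fun i => a (n + i)) (fun i => b (n + i)) j := by
  simp only [Game.playU_eq_runWord, hist_add, Game.runWord, List.foldl_append]

theorem Game.colorSeq_add (G : Game V1 V2 A B) (u : V1) (a : ℕ → A) (b : ℕ → B) (n m : ℕ) :
    G.colorSeq u a b (2 * n + m)
      = G.colorSeq (G.playU u a b n) (fun i => a (n + i)) (fun i => b (n + i)) m := by
  have hdiv : (2 * n + m) / 2 = n + m / 2 := by omega
  simp only [Game.colorSeq, hdiv, Nat.mul_add_mod, Game.playU_add]

end Plays

theorem Nat.infinite_setOf_add_iff (p : ℕ → Prop) (s : ℕ) :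
    {m | p (s + m)}.Infinite ↔ {n | p n}.Infinite := by
  simp only [← Nat.frequently_atTop_iff_infinite, add_comm s]
  rw [← Filter.frequently_map (m := fun m => m + s), Filter.map_add_atTop_eq_nat]

theorem Game.parityWin_iff_of_colorSeq_add {V1 V2 V1' V2' A B A' B' : Type}
    {G : Game V1 V2 A B} {G' : Game V1' V2' A' B'} {u : V1} {a : ℕ → A} {b : ℕ → B}
    {u' : V1'} {a' : ℕ → A'} {b' : ℕ → B'} (s : ℕ)
    (h : ∀ m, G.colorSeq u a b (s + m) = G'.colorSeq u' a' b' m) :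
    G.parityWin u a b ↔ G'.parityWin u' a' b' := by
  have hlevel : ∀ c, {n | G.colorSeq u a b n = c}.Infinite ↔
      {m | G'.colorSeq u' a' b' m = c}.Infinite := fun c => by
    simp only [← h, Nat.infinite_setOf_add_iff (fun n => G.colorSeq u a b n = c)]
  simp only [Game.parityWin, hlevel]

section Transducers

variable {V1 V2 A B M : Type}

def Transducer.afterWord (T : Transducer A B M) (x : List B) : Transducer A B M :=
  { T with start := T.stepFrom T.start x }

theorem Transducer.strat_append (T : Transducer A B M) (w h : List (A × B)) :
    T.strat (w ++ h) = (T.afterWord (w.map Prod.snd)).strat h := by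
  simp [Transducer.strat, Transducer.outWord, Transducer.afterWord, Transducer.stepFrom,
    List.foldl_append]

theorem FinAgrees.infAgrees_of_extendsWord {T : Transducer A B M} {w : List (A × B)}
    {a : ℕ → A} {b : ℕ → B} (hT : FinAgrees T w) (hext : ExtendsWord w a b)
    (htail : InfAgrees (T.afterWord (w.map Prod.snd))
      (fun i => a (w.length + i)) (fun i => b (w.length + i))) :
    InfAgrees T a b := by
  intro i
  rcases lt_or_ge i w.length with hi | hi
  · have hprefix : hist a b i = w.take i := by
      rw [← take_hist a b hi.le, hext.hist_length]
    rw [(hext ⟨i, hi⟩).1, hT ⟨i, hi⟩, hprefix]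
    rfl
  · obtain ⟨j, rfl⟩ := Nat.exists_eq_add_of_le hi
    rw [hist_add, hext.hist_length, Transducer.strat_append]
    exact htail j

theorem Game.prod_playU [DecidableEq A] (G : Game V1 V2 A B) (T : Transducer A B M) (top : V2)
    (u : V1) {a : ℕ → A} {b : ℕ → B} (hT : InfAgrees T a b) (n : ℕ) :
    (G.prod T top).playU (u, T.start) a b n
      = (G.playU u a b n, T.stepFrom T.start ((hist a b n).map Prod.snd)) := by
  induction n with
  | zero => rfl
  | succ n ih =>
    have hout : a n = T.out (T.stepFrom T.start ((hist a b n).map Prod.snd)) := hT n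
    simp only [Game.playU]
    rw [ih]
    simp [Game.prod, hout, hist_succ, Transducer.stepFrom, List.foldl_append]

theorem Game.prod_colorSeq [DecidableEq A] (G : Game V1 V2 A B) (T : Transducer A B M)
    (top : V2) (u : V1) {a : ℕ → A} {b : ℕ → B} (hT : InfAgrees T a b) (n : ℕ) :
    (G.prod T top).colorSeq (u, T.start) a b n = G.colorSeq u a b n := by
  have hout := hT (n / 2)
  simp only [Game.colorSeq, G.prod_playU T top u hT]
  split_ifs <;> simp_all [Game.prod, Transducer.strat, Transducer.outWord]

theorem Game.prod_parityWin_iff [DecidableEq A] (G : Game V1 V2 A B) (T : Transducer A B M)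
    (top : V2) (u : V1) {a : ℕ → A} {b : ℕ → B} (hT : InfAgrees T a b) :
    (G.prod T top).parityWin (u, T.start) a b ↔ G.parityWin u a b := by
  simp only [Game.parityWin, G.prod_colorSeq T top u hT]

end Transducers

section InducedPlay

variable {A B : Type} (τ : List (A × B) → A) (σ : List (A × B) → A → B)

theorem hist_inducedA_inducedB (n : ℕ) :
    hist (inducedA τ σ) (inducedB τ σ) n = inducedHist τ σ n := by
  induction n with
  | zero => rfl
  | succ n ih => simp [hist_succ, ih, inducedHist, inducedA, inducedB]

theorem agreesP1_induced : AgreesP1 τ (inducedA τ σ) (inducedB τ σ) := fun n => by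
  rw [hist_inducedA_inducedB]; rfl

theorem agreesP2_induced : AgreesP2 σ (inducedA τ σ) (inducedB τ σ) := fun n => by
  rw [hist_inducedA_inducedB]; rfl

end InducedPlay

section Prepend

variable {α A B : Type}

def prependSeq (l : List α) (s : ℕ → α) (i : ℕ) : α :=
  if h : i < l.length then l[i] else s (i - l.length)

theorem prependSeq_length_add (l : List α) (s : ℕ → α) (i : ℕ) :
    prependSeq l s (l.length + i) = s i := by
  simp [prependSeq]

theorem extendsWord_prependSeq (w : List (A × B)) (a : ℕ → A) (b : ℕ → B) :
    ExtendsWord w (prependSeq (w.map Prod.fst) a) (prependSeq (w.map Prod.snd) b) := fun i => by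
  simp [prependSeq]

end Prepend

theorem not_live_implies_losing_reachable_product_position_general
    {V1 V2 A B : Type}
    [DecidableEq A]
    (G : Game V1 V2 A B) (k : ℕ)
    (top : V2)
    (hnotlive : ¬ G.kLiveParity k) :
    ∃ (T : Transducer A B (Fin k)) (p : (V1 × Fin k) ⊕ (V2 × Fin k)),
      (G.prod T top).ReachPos p ∧ ¬ (G.prod T top).WinPos p := by
  simp only [Game.kLiveParity, not_forall] at hnotlive
  obtain ⟨w, ⟨T, hT⟩, hbad⟩ := hnotlive
  refine ⟨T, Sum.inl ((G.prod T top).runWord (G.init, T.start) w),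
    Game.ReachPos.base.runWord w, ?_⟩
  rintro ⟨σ, hσ⟩
  let τ := (T.afterWord (w.map Prod.snd)).strat
  let a := prependSeq (w.map Prod.fst) (inducedA τ σ)
  let b := prependSeq (w.map Prod.snd) (inducedB τ σ)
  have hext : ExtendsWord w a b := extendsWord_prependSeq w _ _
  have htail_a : (fun i => a (w.length + i)) = inducedA τ σ := funext fun i => by
    simpa using prependSeq_length_add (w.map Prod.fst) (inducedA τ σ) i
  have htail_b : (fun i => b (w.length + i)) = inducedB τ σ := funext fun i => by
    simpa using prependSeq_length_add (w.map Prod.snd) (inducedB τ σ) i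
  have hagree : InfAgrees T a b :=
    hT.infAgrees_of_extendsWord hext (by rw [htail_a, htail_b]; exact agreesP1_induced τ σ)
  refine hbad ⟨a, b, hext, ⟨T, hagree⟩, ?_⟩
  have hwin : (G.prod T top).parityWin ((G.prod T top).runWord (G.init, T.start) w)
      (inducedA τ σ) (inducedB τ σ) :=
    hσ _ _ (agreesP2_induced τ σ)
  rw [← G.prod_parityWin_iff T top G.init hagree]
  refine (Game.parityWin_iff_of_colorSeq_add (2 * w.length) fun m => ?_).2 hwin
  rw [Game.colorSeq_add, Game.playU_eq_runWord, hext.hist_length, htail_a, htail_b]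

/-- **Claim 2.** Let `G` be a parity game. If `G` is not
`k`-transducer live, then there is a `k`-transducer `T` for Player 1 such that some
position of the product game `G̃` reachable from `(ι, s)` is losing for Player 2. -/
theorem not_live_implies_losing_reachable_product_position
    {V1 V2 A B : Type} [Fintype V1] [Fintype V2] [Fintype A] [Fintype B]
    [DecidableEq A] [Nonempty A] [Nonempty B]
    (G : Game V1 V2 A B) (k : ℕ)
    (top : V2) (htop : ∀ (b : ℕ → B) (a : ℕ → A), G.parityWinV2 top b a)
    (hnotlive : ¬ G.kLiveParity k) :
    ∃ (T : Transducer A B (Fin k)) (p : (V1 × Fin k) ⊕ (V2 × Fin k)),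
      (G.prod T top).ReachPos p ∧ ¬ (G.prod T top).WinPos p :=
  not_live_implies_losing_reachable_product_position_general G k top hnotlive
end

section
/- Let G be a reachability game (F : V → {1,2}) that is k-transducer live. Then there exist a Player-2 strategy σ and a natural number N such that for every k-transducer T for Player 1, the play generated by the unique infinite word agreeing with both σ and f_T visits a vertex of color 2 among its first N positions. -/
/-! ### Auxiliary development -/

open scoped Classical

section Aux

variable {A B : Type}

lemma inducedHist_length (τ : List (A × B) → A) (σ : List (A × B) → A → B) (n : ℕ) :
    (inducedHist τ σ n).length = n := by
  induction n with
  | zero => rfl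
  | succ n ih => simp [inducedHist, ih]

lemma inducedHist_succ (τ : List (A × B) → A) (σ : List (A × B) → A → B) (n : ℕ) :
    inducedHist τ σ (n + 1) = inducedHist τ σ n ++ [(inducedA τ σ n, inducedB τ σ n)] := rfl

lemma inducedHist_take (τ : List (A × B) → A) (σ : List (A × B) → A → B) {m n : ℕ}
    (h : m ≤ n) : (inducedHist τ σ n).take m = inducedHist τ σ m := by
  induction n with
  | zero => interval_cases m; rfl
  | succ n ih =>
    rcases Nat.lt_succ_iff_lt_or_eq.mp (Nat.lt_succ_of_le h) with h' | h'
    · rw [inducedHist_succ, List.take_append_of_le_length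
        (by rw [inducedHist_length]; omega)]
      exact ih (by omega)
    · subst h'
      exact List.take_of_length_le (by rw [inducedHist_length])

lemma inducedHist_getElem (τ : List (A × B) → A) (σ : List (A × B) → A → B) {n i : ℕ}
    (h : i < n) :
    (inducedHist τ σ n)[i]'(by rw [inducedHist_length]; exact h) =
      (inducedA τ σ i, inducedB τ σ i) := by
  induction n with
  | zero => omega
  | succ n ih =>
    rcases Nat.lt_succ_iff_lt_or_eq.mp h with h' | h'
    · simp only [inducedHist_succ]
      rw [List.getElem_append_left (by rw [inducedHist_length]; exact h')]
      exact ih h'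
    · subst h'
      simp only [inducedHist_succ]
      rw [List.getElem_append_right (by rw [inducedHist_length])]
      simp [inducedHist_length]

lemma hist_eq_take {w : List (A × B)} {a : ℕ → A} {b : ℕ → B}
    (he : ExtendsWord w a b) {n : ℕ} (hn : n ≤ w.length) : hist a b n = w.take n := by
  apply List.ext_getElem
  · simpa [hist] using (by omega : n = min n w.length)
  · intro i h1 h2
    simp only [hist, List.getElem_map, List.getElem_range, List.getElem_take]
    have hi : i < w.length := by simp [hist] at h1; omega
    have := he ⟨i, hi⟩
    rw [List.get_eq_getElem] at this
    exact Prod.ext this.1 this.2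

lemma finAgrees_snoc {M : Type} {T : Transducer A B M} {w : List (A × B)} {x : A × B}
    (hw : FinAgrees T w) (hx : x.1 = T.outWord (w.map Prod.snd)) :
    FinAgrees T (w ++ [x]) := by
  rintro ⟨i, hi⟩
  simp only [List.length_append, List.length_singleton] at hi
  rcases Nat.lt_succ_iff_lt_or_eq.mp hi with h' | h'
  · have := hw ⟨i, h'⟩
    simp only [List.get_eq_getElem] at this ⊢
    rw [List.getElem_append_left h', List.take_append_of_le_length (by omega)]
    exact this
  · subst h'
    simp only [List.get_eq_getElem]
    rw [List.getElem_append_right (by omega), List.take_left]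
    simpa using hx

lemma finAgrees_of_snoc {M : Type} {T : Transducer A B M} {w : List (A × B)} {x : A × B}
    (hw : FinAgrees T (w ++ [x])) : FinAgrees T w := by
  rintro ⟨i, hi⟩
  have := hw ⟨i, by simp; omega⟩
  simp only [List.get_eq_getElem] at this ⊢
  rwa [List.getElem_append_left hi, List.take_append_of_le_length (by omega)] at this

lemma finAgrees_of_extends {M : Type} {T : Transducer A B M} {w : List (A × B)}
    {a : ℕ → A} {b : ℕ → B} (he : ExtendsWord w a b) (hT : InfAgrees T a b) :
    FinAgrees T w := by
  rintro ⟨i, hi⟩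
  have h1 := (he ⟨i, hi⟩).1
  have h2 := hT i
  rw [hist_eq_take he (le_of_lt hi)] at h2
  rw [← h1, h2]
  rfl

noncomputable instance fintypeTransducer {M : Type} [Fintype A] [Fintype B] [Fintype M] :
    Fintype (Transducer A B M) :=
  Fintype.ofInjective (fun T => (T.start, T.step, T.out))
    (by rintro ⟨s1, t1, o1⟩ ⟨s2, t2, o2⟩ h; simpa using h)

variable {V1 V2 : Type}

/-- A winning "plan" extending `w`, obtained from liveness (junk if `w` does not
agree with any `k`-transducer). -/
noncomputable def planOf [Nonempty A] [Nonempty B] (G : Game V1 V2 A B) (k : ℕ)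
    (hlive : G.kLiveReach k) (w : List (A × B)) : (ℕ → A) × (ℕ → B) :=
  if h : ∃ T : Transducer A B (Fin k), FinAgrees T w then
    ((hlive w h).choose, (hlive w h).choose_spec.choose)
  else (fun _ => Classical.arbitrary A, fun _ => Classical.arbitrary B)

lemma planOf_spec [Nonempty A] [Nonempty B] (G : Game V1 V2 A B) (k : ℕ)
    (hlive : G.kLiveReach k) (w : List (A × B))
    (hw : ∃ T : Transducer A B (Fin k), FinAgrees T w) :
    ExtendsWord w (planOf G k hlive w).1 (planOf G k hlive w).2 ∧
      (∃ T' : Transducer A B (Fin k),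
        InfAgrees T' (planOf G k hlive w).1 (planOf G k hlive w).2) ∧
      G.reachWin G.init (planOf G k hlive w).1 (planOf G k hlive w).2 := by
  simp only [planOf, dif_pos hw]
  exact (hlive w hw).choose_spec.choose_spec

/-- The current plan, computed from the (reversed) history: stick to the previous
plan as long as Player 1 follows it, otherwise recompute a plan. -/
noncomputable def phiRev (pl : List (A × B) → (ℕ → A) × (ℕ → B)) :
    List (A × B) → (ℕ → A) × (ℕ → B)
  | [] => pl []
  | x :: r =>
      if x.1 = (phiRev pl r).1 r.length then phiRev pl r else pl ((x :: r).reverse)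

noncomputable def phi (pl : List (A × B) → (ℕ → A) × (ℕ → B)) (h : List (A × B)) :
    (ℕ → A) × (ℕ → B) :=
  phiRev pl h.reverse

lemma phi_nil (pl : List (A × B) → (ℕ → A) × (ℕ → B)) : phi pl [] = pl [] := rfl

lemma phi_snoc (pl : List (A × B) → (ℕ → A) × (ℕ → B)) (h : List (A × B)) (x : A × B) :
    phi pl (h ++ [x]) =
      if x.1 = (phi pl h).1 h.length then phi pl h else pl (h ++ [x]) := by
  have h1 : (h ++ [x]).reverse = x :: h.reverse := by simp
  unfold phi
  rw [h1]
  show (if x.1 = (phiRev pl h.reverse).1 h.reverse.length then phiRev pl h.reverse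
    else pl ((x :: h.reverse).reverse)) = _
  simp

/-- The Player-2 strategy: follow the current plan if Player 1 does, otherwise
start a fresh plan. -/
noncomputable def sigmaOf (pl : List (A × B) → (ℕ → A) × (ℕ → B)) (b₀ : B)
    (h : List (A × B)) (a : A) : B :=
  if a = (phi pl h).1 h.length then (phi pl h).2 h.length
  else (pl (h ++ [(a, b₀)])).2 h.length

/-- Against the strategy `sigmaOf (planOf G k hlive) b₀`, every `k`-transducer
loses the reachability game: color 2 is visited at some finite time. -/
lemma main_reach [Fintype A] [Fintype B] [Nonempty A] [Nonempty B] (G : Game V1 V2 A B) (k : ℕ)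
    (hlive : G.kLiveReach k) (b₀ : B) (T : Transducer A B (Fin k)) :
    ∃ n, G.colorSeq G.init (inducedA T.strat (sigmaOf (planOf G k hlive) b₀))
      (inducedB T.strat (sigmaOf (planOf G k hlive) b₀)) n = 2 := by
  classical
  set pl := planOf G k hlive with hpl
  set σ := sigmaOf pl b₀ with hσ
  set τ := T.strat with hτ
  have F1 : ∀ n, FinAgrees T (inducedHist τ σ n) := by
    intro n
    induction n with
    | zero => rintro ⟨i, hi⟩; simp [inducedHist] at hi
    | succ n ih =>
      rw [inducedHist_succ]
      exact finAgrees_snoc ih rfl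
  have F2 : ∀ n,
      ExtendsWord (inducedHist τ σ n) (phi pl (inducedHist τ σ n)).1
        (phi pl (inducedHist τ σ n)).2 ∧
      (∃ T' : Transducer A B (Fin k),
        InfAgrees T' (phi pl (inducedHist τ σ n)).1 (phi pl (inducedHist τ σ n)).2) ∧
      G.reachWin G.init (phi pl (inducedHist τ σ n)).1 (phi pl (inducedHist τ σ n)).2 := by
    intro n
    induction n with
    | zero =>
      have h0 : (inducedHist τ σ 0 : List (A × B)) = [] := rfl
      rw [h0, phi_nil]
      exact planOf_spec G k hlive [] ⟨T, by rintro ⟨i, hi⟩; simp at hi⟩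
    | succ n ih =>
      obtain ⟨hext, hTst, hwin⟩ := ih
      by_cases hc : inducedA τ σ n = (phi pl (inducedHist τ σ n)).1 n
      · -- Player 1 follows the plan
        have hb : inducedB τ σ n = (phi pl (inducedHist τ σ n)).2 n := by
          show σ (inducedHist τ σ n) (inducedA τ σ n) = _
          rw [hσ]
          simp only [sigmaOf]
          rw [inducedHist_length, if_pos hc]
        have hphi : phi pl (inducedHist τ σ (n + 1)) = phi pl (inducedHist τ σ n) := by
          rw [inducedHist_succ, phi_snoc, inducedHist_length, if_pos hc]
        rw [hphi]
        refine ⟨?_, hTst, hwin⟩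
        rw [inducedHist_succ]
        rintro ⟨i, hi⟩
        simp only [List.length_append, List.length_singleton, inducedHist_length] at hi
        rcases Nat.lt_succ_iff_lt_or_eq.mp hi with h' | h'
        · have := hext ⟨i, by rw [inducedHist_length]; exact h'⟩
          simp only [List.get_eq_getElem] at this ⊢
          rwa [List.getElem_append_left (by rw [inducedHist_length]; exact h')]
        · subst h'
          simp only [List.get_eq_getElem]
          rw [List.getElem_append_right (by rw [inducedHist_length])]
          simp only [inducedHist_length, Nat.sub_self, List.getElem_singleton]
          exact ⟨hc.symm, hb.symm⟩
      · -- Player 1 deviates: a fresh plan is started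
        have hw : ∃ T' : Transducer A B (Fin k),
            FinAgrees T' (inducedHist τ σ n ++ [(inducedA τ σ n, b₀)]) :=
          ⟨T, finAgrees_snoc (F1 n) rfl⟩
        have spec := planOf_spec G k hlive _ hw
        have hb : inducedB τ σ n = b₀ := by
          show σ (inducedHist τ σ n) (inducedA τ σ n) = _
          rw [hσ]
          simp only [sigmaOf]
          rw [inducedHist_length, if_neg hc]
          have h1 := (spec.1 ⟨n, by simp [inducedHist_length]⟩).2
          simp only [List.get_eq_getElem, Fin.val_mk] at h1
          rw [h1, List.getElem_append_right (inducedHist_length τ σ n).le]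
          simp [inducedHist_length]
        have hsucc : inducedHist τ σ (n + 1) =
            inducedHist τ σ n ++ [(inducedA τ σ n, b₀)] := by
          rw [inducedHist_succ, hb]
        have hphi : phi pl (inducedHist τ σ (n + 1)) =
            pl (inducedHist τ σ n ++ [(inducedA τ σ n, b₀)]) := by
          rw [hsucc, phi_snoc, inducedHist_length, if_neg hc]
        rw [hphi, hsucc]
        exact spec
  -- counting consistent transducers
  set S : ℕ → Finset (Transducer A B (Fin k)) :=
    fun n => Finset.univ.filter (fun T' => FinAgrees T' (inducedHist τ σ n)) with hS
  have hmono : ∀ n, S (n + 1) ⊆ S n := by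
    intro n T' hT'
    simp only [hS, Finset.mem_filter, Finset.mem_univ, true_and] at hT' ⊢
    rw [inducedHist_succ] at hT'
    exact finAgrees_of_snoc hT'
  have hdev : ∀ n, inducedA τ σ n ≠ (phi pl (inducedHist τ σ n)).1 n →
      (S (n + 1)).card < (S n).card := by
    intro n hne
    obtain ⟨hext, ⟨T', hT'⟩, -⟩ := F2 n
    have hmem : T' ∈ S n := by
      simp only [hS, Finset.mem_filter, Finset.mem_univ, true_and]
      exact finAgrees_of_extends hext hT'
    have hnmem : T' ∉ S (n + 1) := by
      simp only [hS, Finset.mem_filter, Finset.mem_univ, true_and]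
      intro hag
      have h1 := hag ⟨n, by simp [inducedHist_length]⟩
      simp only [List.get_eq_getElem, Fin.val_mk] at h1
      rw [inducedHist_getElem τ σ (Nat.lt_succ_self n),
        inducedHist_take τ σ (Nat.le_succ n)] at h1
      have h2 := hT' n
      rw [hist_eq_take hext (inducedHist_length τ σ n).ge,
        List.take_of_length_le (inducedHist_length τ σ n).le] at h2
      exact hne (h1.trans h2.symm)
    exact Finset.card_lt_card ⟨hmono n, fun hsub => hnmem (hsub hmem)⟩
  have hanti : ∀ m n : ℕ, m ≤ n → (S n).card ≤ (S m).card := by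
    intro m n h
    induction n, h using Nat.le_induction with
    | base => exact le_refl _
    | succ n hmn ih => exact le_trans (Finset.card_le_card (hmono n)) ih
  obtain ⟨n₀, hn₀⟩ := Nat.sInf_mem (Set.range_nonempty (fun n => (S n).card))
  have hstable : ∀ n, n₀ ≤ n → (S n).card = (S n₀).card := by
    intro n hn
    exact le_antisymm (hanti _ _ hn) (le_trans (le_of_eq hn₀) (Nat.sInf_le ⟨n, rfl⟩))
  have hnodev : ∀ n, n₀ ≤ n → inducedA τ σ n = (phi pl (inducedHist τ σ n)).1 n := by
    intro n hn
    by_contra hne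
    have h := hdev n hne
    rw [hstable n hn, hstable (n + 1) (le_trans hn (Nat.le_succ n))] at h
    omega
  have hconst : ∀ n, n₀ ≤ n →
      phi pl (inducedHist τ σ n) = phi pl (inducedHist τ σ n₀) := by
    intro n hn
    induction n, hn using Nat.le_induction with
    | base => rfl
    | succ n hmn ih =>
      rw [inducedHist_succ, phi_snoc, inducedHist_length, if_pos (hnodev n hmn)]
      exact ih
  have haeq : ∀ m, inducedA τ σ m = (phi pl (inducedHist τ σ n₀)).1 m := by
    intro m
    rcases lt_or_ge m n₀ with hm | hm
    · have h := ((F2 n₀).1 ⟨m, by rw [inducedHist_length]; exact hm⟩).1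
      simp only [List.get_eq_getElem, Fin.val_mk] at h
      rw [inducedHist_getElem τ σ hm] at h
      exact h.symm
    · rw [hnodev m hm, hconst m hm]
  have hbeq : ∀ m, inducedB τ σ m = (phi pl (inducedHist τ σ n₀)).2 m := by
    intro m
    rcases lt_or_ge m n₀ with hm | hm
    · have h := ((F2 n₀).1 ⟨m, by rw [inducedHist_length]; exact hm⟩).2
      simp only [List.get_eq_getElem, Fin.val_mk] at h
      rw [inducedHist_getElem τ σ hm] at h
      exact h.symm
    · show σ (inducedHist τ σ m) (inducedA τ σ m) = _
      rw [hσ]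
      simp only [sigmaOf]
      rw [inducedHist_length, if_pos (hnodev m hm), hconst m hm]
  have h1 : inducedA τ σ = (phi pl (inducedHist τ σ n₀)).1 := funext haeq
  have h2 : inducedB τ σ = (phi pl (inducedHist τ σ n₀)).2 := funext hbeq
  obtain ⟨nn, hnn⟩ := (F2 n₀).2.2
  exact ⟨nn, by rw [h1, h2]; exact hnn⟩

end Aux

/-- **Theorem 3, reachability part.** If a reachability game `G`
(colors in `{1,2}`) is `k`-transducer live, then there are a Player-2 strategy `σ`
and a bound `N` such that for every `k`-transducer `T` for Player 1, the play
generated by the unique infinite word agreeing with both `σ` and `f_T` visits a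
vertex of color 2 among its first `N` positions. -/
theorem live_reachability_game_uniform_bound
    {V1 V2 A B : Type} [Fintype V1] [Fintype V2] [Fintype A] [Fintype B]
    [Nonempty A] [Nonempty B]
    (G : Game V1 V2 A B) (k : ℕ)
    (hF1 : ∀ u : V1, G.F1 u = 1 ∨ G.F1 u = 2) (hF2 : ∀ v : V2, G.F2 v = 1 ∨ G.F2 v = 2)
    (hlive : G.kLiveReach k) :
    ∃ (σ : List (A × B) → A → B) (N : ℕ),
      ∀ T : Transducer A B (Fin k),
        ∃ n < N, G.colorSeq G.init (inducedA T.strat σ) (inducedB T.strat σ) n = 2 := by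
  classical
  obtain ⟨b₀⟩ := (inferInstance : Nonempty B)
  choose f hf using fun T : Transducer A B (Fin k) => main_reach G k hlive b₀ T
  exact ⟨sigmaOf (planOf G k hlive) b₀, Finset.univ.sup f + 1, fun T =>
    ⟨f T, Nat.lt_succ_of_le (Finset.le_sup (Finset.mem_univ T)), hf T⟩⟩
end

section
/- Let Σ and Γ be finite alphabets, k ∈ ℕ, T a k-transducer, and x ∈ Γ* an input word. Then there exists an extension x' ∈ Γ* of x (i.e., x is a prefix of x') such that every k-transducer T' whose output function agrees with that of T on all prefixes of x' (that is, L̂'(y) = L̂(y) for every prefix y of x', including the empty word and x' itself) agrees with T on all continuations of x': L̂'(x'·z) = L̂(x'·z) for every z ∈ Γ*. -/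
instance Transducer.finite {A B : Type} [Finite A] [Finite B] (k : ℕ) :
    Finite (Transducer A B (Fin k)) :=
  Finite.of_injective (fun T => (T.start, T.step, T.out)) (by
    rintro ⟨s, st, o⟩ ⟨s', st', o'⟩ h
    simp_all)

/-- Transport a transducer along an equivalence of state sets. -/
def Transducer.transport {A B M M' : Type} (e : M ≃ M') (T : Transducer A B M) :
    Transducer A B M' :=
  ⟨e T.start, fun m b => e (T.step (e.symm m) b), fun m => T.out (e.symm m)⟩

lemma Transducer.stepFrom_transport {A B M M' : Type} (e : M ≃ M') (T : Transducer A B M)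
    (m : M) (x : List B) :
    (T.transport e).stepFrom (e m) x = e (T.stepFrom m x) := by
  induction x generalizing m with
  | nil => rfl
  | cons b x ih =>
    simp only [Transducer.stepFrom, List.foldl_cons] at *
    rw [show (T.transport e).step (e m) b = e (T.step m b) by
      simp [Transducer.transport], ih]

lemma Transducer.outWord_transport {A B M M' : Type} (e : M ≃ M') (T : Transducer A B M)
    (x : List B) : (T.transport e).outWord x = T.outWord x := by
  unfold Transducer.outWord
  rw [show (T.transport e).start = e T.start from rfl, Transducer.stepFrom_transport]
  simp [Transducer.transport]

/-- Key lemma: greedy extension works against all `Fin k`-state transducers. -/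
lemma Transducer.key {A B : Type} [Finite A] [Finite B] (k : ℕ) (T0 : List B → A)
    (w : List B) :
    ∃ x' : List B, w <+: x' ∧ ∀ T'' : Transducer A B (Fin k),
      (∀ y : List B, y <+: x' → T''.outWord y = T0 y) →
      ∀ z : List B, T''.outWord (x' ++ z) = T0 (x' ++ z) := by
  classical
  set S : List B → Set (Transducer A B (Fin k)) :=
    fun v => {T'' | ∀ y : List B, y <+: v → T''.outWord y = T0 y} with hS
  suffices h : ∀ n (v : List B), (S v).ncard ≤ n → ∃ x' : List B, v <+: x' ∧
      ∀ T'' : Transducer A B (Fin k),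
        (∀ y : List B, y <+: x' → T''.outWord y = T0 y) →
        ∀ z : List B, T''.outWord (x' ++ z) = T0 (x' ++ z) from
    h (S w).ncard w le_rfl
  intro n
  induction n with
  | zero =>
    intro v hv
    refine ⟨v, List.prefix_refl v, fun T'' hT'' z => ?_⟩
    exfalso
    have hmem : T'' ∈ S v := hT''
    have hfin : (S v).Finite := Set.toFinite _
    have : (S v).ncard = 0 := Nat.le_zero.mp hv
    rw [Set.ncard_eq_zero hfin] at this
    simp [this] at hmem
  | succ n ih =>
    intro v hv
    by_cases hgood : ∀ T'' : Transducer A B (Fin k),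
        (∀ y : List B, y <+: v → T''.outWord y = T0 y) →
        ∀ z : List B, T''.outWord (v ++ z) = T0 (v ++ z)
    · exact ⟨v, List.prefix_refl v, hgood⟩
    · push_neg at hgood
      obtain ⟨T'', hT'', z, hz⟩ := hgood
      have hsub : S (v ++ z) ⊂ S v := by
        constructor
        · intro T''' hT''' y hy
          exact hT''' y (hy.trans ⟨z, rfl⟩)
        · intro hcon
          exact hz (hcon hT'' (v ++ z) (List.prefix_refl _))
      have hlt : (S (v ++ z)).ncard < (S v).ncard :=
        Set.ncard_lt_ncard hsub (Set.toFinite _)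
      obtain ⟨x', hpre, hx'⟩ := ih (v ++ z) (by omega)
      exact ⟨x', (List.prefix_append v z).trans hpre, hx'⟩

/-- For every `k`-transducer `T` and input word `x` there is an
extension `x'` of `x` such that every `k`-transducer `T'` whose output function agrees
with that of `T` on all prefixes of `x'` agrees with `T` on all continuations of `x'`. -/
theorem extension_determining_transducer_behavior
    {A B M : Type} [Fintype A] [Fintype B] [Fintype M] (k : ℕ)
    (T : Transducer A B M) (hM : Fintype.card M = k) (x : List B) :
    ∃ x' : List B, x <+: x' ∧
      ∀ (M' : Type) [Fintype M'] (T' : Transducer A B M'), Fintype.card M' = k →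
        (∀ y : List B, y <+: x' → T'.outWord y = T.outWord y) →
        ∀ z : List B, T'.outWord (x' ++ z) = T.outWord (x' ++ z) := by
  obtain ⟨x', hpre, hx'⟩ := Transducer.key k T.outWord x
  refine ⟨x', hpre, ?_⟩
  intro M' _ T' hcard hagree z
  let e : M' ≃ Fin k := Fintype.equivFinOfCardEq hcard
  have ht := Transducer.outWord_transport e T'
  have := hx' (T'.transport e) (fun y hy => (ht y).trans (hagree y hy)) z
  rw [ht] at this
  exact this
end

section
/- Let S be a finite set with N elements, R ⊆ S × S a relation, and F : S → ℕ a coloring. If there exists an infinite R-path from a state p whose largest color occurring infinitely often is even, then there exist a state q, a finite R-path from p to q of length at most N, and an R-cycle from q back to q of length at least 1 and at most N such that F(q) is even and F(q) is the maximum color among the states on the cycle. In particular, the eventually periodic (lasso-shaped) path obtained by following the path from p to q and then repeating the cycle forever is an infinite R-path from p whose largest infinitely occurring color is even, with preperiod and period each at most N. -/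
/-!
Let `c` be the even color that is largest among those occurring infinitely often, and `q` a state
of color `c` visited infinitely often. Past some time all colors are at most `c`, so between two
later visits of `q` the path is an `R`-cycle on which `F q` is maximal. Cutting out the segment
between two equal states (pigeonhole) shortens any path to length at most `|S|`, and a cycle to
length between `1` and `|S|`; the lasso made of the shortened stem and cycle sees `q` once per
period and, from the cycle on, only colors at most `F q`.
-/

/-- An infinite path `f` (through some relation) is winning if the largest color
occurring infinitely often along it is even: there is an even color `c` occurring
infinitely often such that every color occurring infinitely often is at most `c`. -/
def MaxParityWin {S : Type} (F : S → ℕ) (f : ℕ → S) : Prop :=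
  ∃ c, Even c ∧ {i | F (f i) = c}.Infinite ∧ ∀ d, {i | F (f i) = d}.Infinite → d ≤ c

open Filter

section Paths

variable {S : Type*} {R : S → S → Prop}

def splice (f g : ℕ → S) (a : ℕ) : ℕ → S := fun k => if k < a then f k else g (k - a)

@[simp]
theorem splice_add (f g : ℕ → S) (a k : ℕ) : splice f g a (a + k) = g k := by
  simp [splice]

theorem splice_zero {f g : ℕ → S} {a : ℕ} (hfg : f a = g 0) : splice f g a 0 = f 0 := by
  rcases Nat.eq_zero_or_pos a with rfl | ha
  · simpa [splice] using hfg.symm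
  · simp [splice, ha]

theorem splice_rel {f g : ℕ → S} {a : ℕ} (hf : ∀ k < a, R (f k) (f (k + 1))) (hfg : f a = g 0)
    {k : ℕ} (hg : a ≤ k → R (g (k - a)) (g (k - a + 1))) :
    R (splice f g a k) (splice f g a (k + 1)) := by
  unfold splice
  rcases lt_trichotomy (k + 1) a with hk | hk | hk
  · simpa [hk, (Nat.lt_succ_self k).trans hk] using hf k (by omega)
  · simpa [hk, ← hfg, (by omega : k < a)] using hf k (by omega)
  · have hsub : k + 1 - a = k - a + 1 := by omega
    rw [if_neg (by omega), if_neg (by omega), hsub]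
    exact hg (by omega)

theorem rel_mod_of_cycle {g : ℕ → S} {m : ℕ} (hm : 0 < m) (hg : ∀ k < m, R (g k) (g (k + 1)))
    (hcycle : g m = g 0) (k : ℕ) : R (g (k % m)) (g ((k + 1) % m)) := by
  rw [← Nat.mod_add_mod]
  have hk : k % m + 1 ≤ m := Nat.mod_lt k hm
  rcases hk.lt_or_eq with hlt | heq
  · rw [Nat.mod_eq_of_lt hlt]
    exact hg _ (Nat.mod_lt k hm)
  · have hstep := hg _ (Nat.mod_lt k hm)
    rw [heq, Nat.mod_self, ← hcycle]
    rwa [heq] at hstep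

theorem rel_splice_mod {f g : ℕ → S} {n m : ℕ} (hm : 0 < m) (hf : ∀ k < n, R (f k) (f (k + 1)))
    (hg : ∀ k < m, R (g k) (g (k + 1))) (hfg : f n = g 0) (hcycle : g m = g 0) (k : ℕ) :
    R (splice f (fun k => g (k % m)) n k) (splice f (fun k => g (k % m)) n (k + 1)) :=
  splice_rel hf (by simpa using hfg) fun _ => rel_mod_of_cycle hm hg hcycle (k - n)

theorem exists_shortcut_of_eq {f : ℕ → S} {L i j : ℕ} (hf : ∀ k < L, R (f k) (f (k + 1)))
    (hij : i < j) (hjL : j ≤ L) (heq : f i = f j) :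
    ∃ g : ℕ → S, g 0 = f 0 ∧ g (L - (j - i)) = f L ∧ ∀ k < L - (j - i), R (g k) (g (k + 1)) := by
  have hjoin : f i = (fun k => f (j + k)) 0 := by simpa using heq
  refine ⟨splice f (fun k => f (j + k)) i, splice_zero hjoin, ?_, fun k hk => ?_⟩
  · simp [show L - (j - i) = i + (L - j) by omega, hjL]
  · exact splice_rel (fun k hk => hf k (by omega)) hjoin fun _ => hf (j + (k - i)) (by omega)

theorem exists_lt_le_card_eq [Fintype S] (f : ℕ → S) :
    ∃ i j, i < j ∧ j ≤ Fintype.card S ∧ f i = f j := by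
  obtain ⟨x, y, hne, hxy⟩ :=
    Fintype.exists_ne_map_eq_of_card_lt (fun k : Fin (Fintype.card S + 1) => f k) (by simp)
  rcases Fin.lt_or_lt_of_ne hne with h | h
  · exact ⟨x, y, h, Nat.lt_succ_iff.mp y.isLt, hxy⟩
  · exact ⟨y, x, h, Nat.lt_succ_iff.mp x.isLt, hxy.symm⟩

theorem exists_path_length_le_card [Fintype S] {f : ℕ → S} {L : ℕ}
    (hf : ∀ k < L, R (f k) (f (k + 1))) :
    ∃ (n : ℕ) (g : ℕ → S), n ≤ Fintype.card S ∧ (0 < L → 0 < n) ∧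
      g 0 = f 0 ∧ g n = f L ∧ ∀ k < n, R (g k) (g (k + 1)) := by
  induction L using Nat.strong_induction_on generalizing f with
  | _ L ih =>
    by_cases hL : L ≤ Fintype.card S
    · exact ⟨L, f, hL, id, rfl, rfl, hf⟩
    obtain ⟨i, j, hij, hj, heq⟩ := exists_lt_le_card_eq f
    obtain ⟨g, hg0, hgL, hg⟩ := exists_shortcut_of_eq hf hij (by omega) heq
    obtain ⟨n, g', hn, hpos, hg'0, hg'n, hg'⟩ := ih _ (by omega) hg
    exact ⟨n, g', hn, fun _ => hpos (by omega), hg'0.trans hg0, hg'n.trans hgL, hg'⟩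

end Paths

theorem exists_infinite_fiber_of_infinite_preimage {α S : Type*} [Finite S] {u : α → S}
    {s : Set S} (h : (u ⁻¹' s).Infinite) : ∃ x ∈ s, (u ⁻¹' {x}).Infinite := by
  by_contra! hfin
  exact h ((Set.toFinite s).preimage' hfin)

section Parity

variable {S : Type} {F : S → ℕ} {u : ℕ → S}

theorem MaxParityWin.exists_eventually_le [Finite S] (h : MaxParityWin F u) :
    ∃ c, Even c ∧ {i | F (u i) = c}.Infinite ∧ ∀ᶠ i in atTop, F (u i) ≤ c := by
  obtain ⟨c, hc, hinf, hmax⟩ := h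
  refine ⟨c, hc, hinf, ?_⟩
  rw [← Nat.cofinite_eq_atTop, eventually_cofinite]
  by_contra hbig
  obtain ⟨x, hx, hxinf⟩ := exists_infinite_fiber_of_infinite_preimage (s := {x | ¬F x ≤ c}) hbig
  exact hx (hmax (F x) (hxinf.mono fun i hi => congrArg F hi))

theorem maxParityWin_of_eventually_le {c : ℕ} (hc : Even c) (hinf : {i | F (u i) = c}.Infinite)
    (hle : ∀ᶠ i in atTop, F (u i) ≤ c) : MaxParityWin F u := by
  refine ⟨c, hc, hinf, fun d hd => ?_⟩
  obtain ⟨N, hN⟩ := eventually_atTop.mp hle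
  obtain ⟨i, hi, hNi⟩ := hd.exists_gt N
  exact hi ▸ hN i hNi.le

theorem maxParityWin_splice_mod (f : ℕ → S) {g : ℕ → S} {n m : ℕ} (hm : 0 < m)
    (heven : Even (F (g 0))) (hmax : ∀ k < m, F (g k) ≤ F (g 0)) :
    MaxParityWin F (splice f (fun k => g (k % m)) n) := by
  refine maxParityWin_of_eventually_le heven ?_ ?_
  · refine Set.infinite_of_forall_exists_gt fun a => ⟨n + (a + 1) * m, ?_, ?_⟩
    · simp
    · nlinarith
  · refine eventually_atTop.mpr ⟨n, fun k hk => ?_⟩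
    obtain ⟨k, rfl⟩ := Nat.exists_eq_add_of_le hk
    simpa using hmax _ (Nat.mod_lt k hm)

end Parity

/-- If a winning infinite `R`-path starts at `p` (over a finite
state set `S` with `N` elements), then there are a state `q`, a finite `R`-path from
`p` to `q` of length at most `N` and an `R`-cycle at `q` of length between 1 and `N`
such that `F q` is even and is the maximum color on the cycle; in particular the
corresponding lasso-shaped path is a winning infinite `R`-path from `p` with
preperiod and period at most `N`. -/
theorem winning_path_implies_winning_lasso
    {S : Type} [Fintype S] (R : S → S → Prop) (F : S → ℕ) (p : S)
    (h : ∃ f : ℕ → S, f 0 = p ∧ (∀ i, R (f i) (f (i + 1))) ∧ MaxParityWin F f) :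
    ∃ (q : S) (n m : ℕ) (f g : ℕ → S),
      n ≤ Fintype.card S ∧ f 0 = p ∧ f n = q ∧ (∀ i < n, R (f i) (f (i + 1))) ∧
      1 ≤ m ∧ m ≤ Fintype.card S ∧ g 0 = q ∧ g m = q ∧ (∀ i < m, R (g i) (g (i + 1))) ∧
      Even (F q) ∧ (∀ i ≤ m, F (g i) ≤ F q) ∧
      (let lasso : ℕ → S := fun i => if i < n then f i else g ((i - n) % m)
       lasso 0 = p ∧ (∀ i, R (lasso i) (lasso (i + 1))) ∧ MaxParityWin F lasso) := by
  obtain ⟨f, rfl, hf, hwin⟩ := h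
  obtain ⟨c, hc, hinf, hle⟩ := hwin.exists_eventually_le
  obtain ⟨q, rfl, hq⟩ := exists_infinite_fiber_of_infinite_preimage (s := {x | F x = c}) hinf
  obtain ⟨T, hT⟩ := eventually_atTop.mp hle
  obtain ⟨i, hfi : f i = q, hTi⟩ := hq.exists_gt T
  obtain ⟨j, hfj : f j = q, hij⟩ := hq.exists_gt i
  obtain ⟨n, stem, hn, -, hstem0, hstemn, hstem⟩ :=
    exists_path_length_le_card (R := R) (f := f) (L := i) fun k _ => hf k
  -- The loop is shortened inside `R` restricted to colors at most `F q`, so it keeps `F q` maximal.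
  obtain ⟨m, loop, hm, hmpos, hloop0, hloopm, hloop⟩ :=
    exists_path_length_le_card (R := fun x y => R x y ∧ F y ≤ F q) (f := fun k => f (i + k))
      (L := j - i) fun k _ => ⟨hf (i + k), hT _ (by omega)⟩
  have hq0 : loop 0 = q := hloop0.trans hfi
  have hqm : loop m = q := hloopm.trans (by simpa [hij.le] using hfj)
  have hmax : ∀ k ≤ m, F (loop k) ≤ F q := by
    rintro (_ | k) hk
    · rw [hq0]
    · exact (hloop k hk).2
  refine ⟨q, n, m, stem, loop, hn, hstem0, hstemn.trans hfi, hstem, hmpos (by omega), hm, hq0,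
    hqm, fun k hk => (hloop k hk).1, hc, hmax, ?_⟩
  have hjoin : stem n = loop 0 := hstemn.trans (hfi.trans hq0.symm)
  exact ⟨(splice_zero (g := fun k => loop (k % m)) (by simpa using hjoin)).trans hstem0,
    rel_splice_mod (by omega) hstem (fun k hk => (hloop k hk).1) hjoin (hqm.trans hq0.symm),
    maxParityWin_splice_mod stem (by omega) (hq0 ▸ hc) fun k hk => hq0 ▸ hmax k hk.le⟩
end
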